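/- Let H be an Arf numerical semigroup and let H₁, …, H_r be Arf numerical semigroups each containing H. The following are equivalent: (1) H = H₁ ∩ ⋯ ∩ H_r; (2) for every Arf special gap x ∈ ArfG(H) there exists i ∈ {1, …, r} with x ∉ H_i. -/

import Mathlib

/-- A numerical semigroup: a subset of ℕ containing 0, closed under addition,
with finite complement. -/
def IsNumericalSemigroup (H : Set ℕ) : Prop :=
  0 ∈ H ∧ (∀ a ∈ H, ∀ b ∈ H, a + b ∈ H) ∧ (Hᶜ : Set ℕ).Finite

/-- An Arf numerical semigroup: for all a ≥ b ≥ c in H, a + b - c ∈ H. -/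
def IsArfSemigroup (H : Set ℕ) : Prop :=
  IsNumericalSemigroup H ∧
    ∀ a ∈ H, ∀ b ∈ H, ∀ c ∈ H, c ≤ b → b ≤ a → a + b - c ∈ H

/-- The special gaps of H. -/
def SpecialGaps (H : Set ℕ) : Set ℕ :=
  {x | x ∉ H ∧ IsNumericalSemigroup (H ∪ {x})}

/-- The Arf special gaps of H. -/
def ArfSpecialGaps (H : Set ℕ) : Set ℕ :=
  {x | x ∉ H ∧ IsArfSemigroup (H ∪ {x})}

/-- The Frobenius number of H (the largest gap; meaningful when H ≠ ℕ). -/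
noncomputable def Frobenius (H : Set ℕ) : ℕ := sSup Hᶜ

/-- An irreducible numerical semigroup. -/
def IsIrreducibleNS (H : Set ℕ) : Prop :=
  IsNumericalSemigroup H ∧
    ¬ ∃ H₁ H₂ : Set ℕ, IsNumericalSemigroup H₁ ∧ IsNumericalSemigroup H₂ ∧
      H ⊂ H₁ ∧ H ⊂ H₂ ∧ H = H₁ ∩ H₂

/-- An Arf-irreducible numerical semigroup. -/
def ArfIrreducible (H : Set ℕ) : Prop :=
  IsArfSemigroup H ∧
    ¬ ∃ H₁ H₂ : Set ℕ, IsArfSemigroup H₁ ∧ IsArfSemigroup H₂ ∧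
      H ⊂ H₁ ∧ H ⊂ H₂ ∧ H = H₁ ∩ H₂

/-- The set of Arf numerical semigroups containing H. -/
def ArfOver (H : Set ℕ) : Set (Set ℕ) := {S | IsArfSemigroup S ∧ H ⊆ S}

/-- The set of Arf-irreducible numerical semigroups containing H. -/
def QA (H : Set ℕ) : Set (Set ℕ) := {S | ArfIrreducible S ∧ H ⊆ S}

/-- A variety of numerical semigroups. -/
def IsVariety (Ψ : Set (Set ℕ)) : Prop :=
  Ψ.Nonempty ∧ (∀ S ∈ Ψ, IsNumericalSemigroup S) ∧
    (∀ S ∈ Ψ, ∀ S' : Set ℕ, IsNumericalSemigroup S' → S ⊆ S' → S' ∈ Ψ) ∧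
    (∀ S ∈ Ψ, ∀ S' ∈ Ψ, S ∩ S' ∈ Ψ)

/-- The variety generated by a family of numerical semigroups. -/
def GeneratedVariety (F : Set (Set ℕ)) : Set (Set ℕ) :=
  ⋂₀ {Ψ | IsVariety Ψ ∧ F ⊆ Ψ}

/-! If `H ⊊ S` are Arf, the largest element `x` of `S \ H` is an Arf special gap of `H`: every
element of `S` that is at least `x` lies in `H ∪ {x}`, and the sums and Arf combinations
`a + b - c` needed to check closure of `H ∪ {x}` either lie in `H` already or are elements of `S`
that are at least `x`. Applied to `S = ⋂ i, f i`, which is Arf as a finite intersection of Arf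
semigroups, this yields an Arf special gap of `H` lying in every `f i` unless `H = ⋂ i, f i`. -/

section Intersection

variable {ι : Type*} {f : ι → Set ℕ}

theorem IsNumericalSemigroup.iInter [Finite ι] (hf : ∀ i, IsNumericalSemigroup (f i)) :
    IsNumericalSemigroup (⋂ i, f i) := by
  refine ⟨Set.mem_iInter.2 fun i => (hf i).1, fun a ha b hb => ?_, ?_⟩
  · rw [Set.mem_iInter] at ha hb ⊢
    exact fun i => (hf i).2.1 a (ha i) b (hb i)
  · rw [Set.compl_iInter]
    exact Set.finite_iUnion fun i => (hf i).2.2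

theorem IsArfSemigroup.iInter [Finite ι] (hf : ∀ i, IsArfSemigroup (f i)) :
    IsArfSemigroup (⋂ i, f i) := by
  refine ⟨IsNumericalSemigroup.iInter fun i => (hf i).1, fun a ha b hb c hc hcb hba => ?_⟩
  rw [Set.mem_iInter] at ha hb hc ⊢
  exact fun i => (hf i).2 a (ha i) b (hb i) c (hc i) hcb hba

end Intersection

section SpecialGaps

variable {H S : Set ℕ} {x : ℕ}

theorem mem_arfSpecialGaps_of_forall_lt (hH : IsArfSemigroup H) (hS : IsArfSemigroup S)
    (hHS : H ⊆ S) (hxS : x ∈ S) (hxH : x ∉ H) (hmax : ∀ y ∈ S, x < y → y ∈ H) :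
    x ∈ ArfSpecialGaps H := by
  have hsub : H ∪ {x} ⊆ S := Set.union_subset hHS (Set.singleton_subset_iff.2 hxS)
  have mem_of_le : ∀ y ∈ S, x ≤ y → y ∈ H ∪ {x} := fun y hy hxy =>
    hxy.lt_or_eq.imp (hmax y hy) fun h => h.symm
  have x_le_of_notMem : ∀ a ∈ H ∪ {x}, a ∉ H → x ≤ a := fun a ha haH =>
    (ha.resolve_left haH).ge
  refine ⟨hxH, ⟨Or.inl hH.1.1, fun a ha b hb => ?_, ?_⟩, fun a ha b hb c hc hcb hba => ?_⟩
  · by_cases habH : a ∈ H ∧ b ∈ H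
    · exact Or.inl (hH.1.2.1 a habH.1 b habH.2)
    refine mem_of_le _ (hS.1.2.1 a (hsub ha) b (hsub hb)) ?_
    rcases not_and_or.1 habH with haH | hbH
    · exact (x_le_of_notMem a ha haH).trans (Nat.le_add_right a b)
    · exact (x_le_of_notMem b hb hbH).trans (Nat.le_add_left b a)
  · exact hH.1.2.2.subset (Set.compl_subset_compl.2 Set.subset_union_left)
  · by_cases habcH : a ∈ H ∧ b ∈ H ∧ c ∈ H
    · exact Or.inl (hH.2 a habcH.1 b habcH.2.1 c habcH.2.2 hcb hba)
    have hxa : x ≤ a := by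
      simp only [not_and_or] at habcH
      rcases habcH with haH | hbH | hcH
      · exact x_le_of_notMem a ha haH
      · exact (x_le_of_notMem b hb hbH).trans hba
      · exact (x_le_of_notMem c hc hcH).trans (hcb.trans hba)
    exact mem_of_le _ (hS.2 a (hsub ha) b (hsub hb) c (hsub hc) hcb hba) (by omega)

theorem exists_mem_arfSpecialGaps_of_ssubset (hH : IsArfSemigroup H) (hS : IsArfSemigroup S)
    (hHS : H ⊂ S) : ∃ x ∈ ArfSpecialGaps H, x ∈ S := by
  have hfin : (S \ H).Finite := hH.1.2.2.subset (Set.sdiff_subset_compl S H)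
  obtain ⟨x, ⟨hxS, hxH⟩, hxmax⟩ := hfin.exists_maximal (Set.nonempty_of_ssubset hHS)
  refine ⟨x, mem_arfSpecialGaps_of_forall_lt hH hS hHS.subset hxS hxH fun y hy hxy => ?_, hxS⟩
  by_contra hyH
  exact hxy.not_ge (hxmax ⟨hy, hyH⟩ hxy.le)

end SpecialGaps

/-- For Arf numerical semigroups H₁,…,H_r containing the Arf numerical semigroup H:
H = H₁ ∩ ⋯ ∩ H_r iff every Arf special gap of H is missing from some H_i. -/
theorem eq_iInter_iff_arfSpecialGaps (H : Set ℕ) (hH : IsArfSemigroup H)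
    (r : ℕ) (f : Fin r → Set ℕ)
    (hf : ∀ i, IsArfSemigroup (f i) ∧ H ⊆ f i) :
    H = ⋂ i, f i ↔ ∀ x ∈ ArfSpecialGaps H, ∃ i, x ∉ f i := by
  constructor
  · rintro rfl x hx
    by_contra! hxf
    exact hx.1 (Set.mem_iInter.2 hxf)
  · intro hgaps
    by_contra hne
    have hHI : H ⊂ ⋂ i, f i := (Set.subset_iInter fun i => (hf i).2).ssubset_of_ne hne
    obtain ⟨x, hx, hxI⟩ :=
      exists_mem_arfSpecialGaps_of_ssubset hH (IsArfSemigroup.iInter fun i => (hf i).1) hHI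
    obtain ⟨i, hxi⟩ := hgaps x hx
    exact hxi (Set.mem_iInter.1 hxI i)
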